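/- Over a commutative ring R in which 2 is invertible, the Lee Frobenius algebra (m(x_−⊗x_−)=x_+, Δ(x_−)=x_−⊗x_− + x_+⊗x_+, Δ(x_+)=x_+⊗x_−+x_−⊗x_+, m(x_+⊗x_±)=x_±) and the Bar-Natan Frobenius algebra are isomorphic as Frobenius algebras after a rescaling (twist): explicitly, there is an R-module automorphism of R⟨x_+,x_−⟩ intertwining the two multiplications and intertwining the comultiplications up to an invertible scalar. -/

import Mathlib

open TensorProduct

/-!
The Bar-Natan and Lee Frobenius algebras over a commutative ring `R`.  The underlying
module is `V = R⟨x₊, x₋⟩`, realized as `R × R` (first coordinate: coefficient of `x₊`;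
second: coefficient of `x₋`).
-/

variable (R : Type*) [CommRing R]

/-- The basis element `x₊ = (1,0)`. -/
def xp : R × R := (1, 0)

/-- The basis element `x₋ = (0,1)`. -/
def xm : R × R := (0, 1)

/-- Bar-Natan multiplication: `x₊` is the unit, `x₋x₋ = x₋`. -/
def mulBN : (R × R) →ₗ[R] (R × R) →ₗ[R] (R × R) :=
  LinearMap.mk₂ R (fun v w => (v.1 * w.1, v.1 * w.2 + v.2 * w.1 + v.2 * w.2))
    (by intro m₁ m₂ n; simp [Prod.ext_iff]; constructor <;> ring)
    (by intro c m n; simp [Prod.ext_iff, smul_eq_mul]; constructor <;> ring)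
    (by intro m n₁ n₂; simp [Prod.ext_iff]; constructor <;> ring)
    (by intro c m n; simp [Prod.ext_iff, smul_eq_mul]; constructor <;> ring)

/-- Lee multiplication: `x₊` is the unit, `x₋x₋ = x₊`. -/
def mulLee : (R × R) →ₗ[R] (R × R) →ₗ[R] (R × R) :=
  LinearMap.mk₂ R (fun v w => (v.1 * w.1 + v.2 * w.2, v.1 * w.2 + v.2 * w.1))
    (by intro m₁ m₂ n; simp [Prod.ext_iff]; constructor <;> ring)
    (by intro c m n; simp [Prod.ext_iff, smul_eq_mul]; constructor <;> ring)
    (by intro m n₁ n₂; simp [Prod.ext_iff]; constructor <;> ring)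
    (by intro c m n; simp [Prod.ext_iff, smul_eq_mul]; constructor <;> ring)

/-- Bar-Natan comultiplication: `Δ(x₋) = x₋⊗x₋`, `Δ(x₊) = x₊⊗x₋ + x₋⊗x₊ − x₊⊗x₊`. -/
noncomputable def deltaBN : (R × R) →ₗ[R] (R × R) ⊗[R] (R × R) :=
  (LinearMap.toSpanSingleton R _
      (xp R ⊗ₜ[R] xm R + xm R ⊗ₜ[R] xp R - xp R ⊗ₜ[R] xp R)).comp (LinearMap.fst R R R)
  + (LinearMap.toSpanSingleton R _ (xm R ⊗ₜ[R] xm R)).comp (LinearMap.snd R R R)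

/-- Lee comultiplication: `Δ(x₋) = x₋⊗x₋ + x₊⊗x₊`, `Δ(x₊) = x₊⊗x₋ + x₋⊗x₊`. -/
noncomputable def deltaLee : (R × R) →ₗ[R] (R × R) ⊗[R] (R × R) :=
  (LinearMap.toSpanSingleton R _
      (xp R ⊗ₜ[R] xm R + xm R ⊗ₜ[R] xp R)).comp (LinearMap.fst R R R)
  + (LinearMap.toSpanSingleton R _
      (xm R ⊗ₜ[R] xm R + xp R ⊗ₜ[R] xp R)).comp (LinearMap.snd R R R)

@[simp] lemma mulBN_apply (v w : R × R) :
    mulBN R v w = (v.1 * w.1, v.1 * w.2 + v.2 * w.1 + v.2 * w.2) := rfl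

@[simp] lemma mulLee_apply (v w : R × R) :
    mulLee R v w = (v.1 * w.1 + v.2 * w.2, v.1 * w.2 + v.2 * w.1) := rfl

@[simp] lemma deltaBN_xp :
    deltaBN R (xp R) = xp R ⊗ₜ xm R + xm R ⊗ₜ xp R - xp R ⊗ₜ xp R := by
  simp [deltaBN, xp]

@[simp] lemma deltaBN_xm : deltaBN R (xm R) = xm R ⊗ₜ xm R := by
  simp [deltaBN, xm]

@[simp] lemma deltaLee_xp : deltaLee R (xp R) = xp R ⊗ₜ xm R + xm R ⊗ₜ xp R := by
  simp [deltaLee, xp]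

@[simp] lemma deltaLee_xm : deltaLee R (xm R) = xm R ⊗ₜ xm R + xp R ⊗ₜ xp R := by
  simp [deltaLee, xm]

section Twist

variable [Invertible (2 : R)]

/-- Sends the Bar-Natan idempotent `x₋` to the Lee idempotent `(x₊ + x₋)/2` (recall `x₋² = x₊` in
Lee's algebra), and fixes the common unit `x₊`. -/
def bnToLee : (R × R) ≃ₗ[R] (R × R) where
  toFun v := (v.1 + ⅟2 * v.2, ⅟2 * v.2)
  invFun v := (v.1 - v.2, 2 * v.2)
  map_add' v w := by ext <;> simp only [Prod.fst_add, Prod.snd_add] <;> ring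
  map_smul' c v := by ext <;> simp only [Prod.smul_fst, Prod.smul_snd, smul_eq_mul,
    RingHom.id_apply] <;> ring
  left_inv v := by ext <;> simp
  right_inv v := by ext <;> simp

@[simp] lemma bnToLee_apply (v : R × R) :
    bnToLee R v = (v.1 + ⅟2 * v.2, ⅟2 * v.2) := rfl

lemma bnToLee_xp : bnToLee R (xp R) = xp R := by
  simp [xp]

lemma bnToLee_xm : bnToLee R (xm R) = (⅟2 : R) • (xp R + xm R) := by
  simp [xp, xm]

lemma bnToLee_mulBN (v w : R × R) :
    bnToLee R (mulBN R v w) = mulLee R (bnToLee R v) (bnToLee R w) := by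
  ext <;> simp only [mulBN_apply, mulLee_apply, bnToLee_apply] <;>
    linear_combination (-(⅟2 * v.2 * w.2)) * (invOf_mul_self (2 : R))

lemma map_bnToLee_comp_deltaBN :
    (TensorProduct.map (bnToLee R).toLinearMap (bnToLee R).toLinearMap).comp (deltaBN R)
      = (⅟2 : R) • ((deltaLee R).comp (bnToLee R).toLinearMap) := by
  refine LinearMap.prod_ext (LinearMap.ext_ring ?_) (LinearMap.ext_ring ?_)
  · change TensorProduct.map _ _ (deltaBN R (xp R)) = (⅟2 : R) • deltaLee R (bnToLee R (xp R))
    simp only [deltaBN_xp, bnToLee_xp, deltaLee_xp, map_sub, map_add, map_tmul,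
      LinearEquiv.coe_coe, bnToLee_xm, tmul_add, add_tmul, tmul_smul, ← smul_tmul', smul_add]
    match_scalars <;> simp [invOf_two_add_invOf_two]
  · change TensorProduct.map _ _ (deltaBN R (xm R)) = (⅟2 : R) • deltaLee R (bnToLee R (xm R))
    simp only [deltaBN_xm, deltaLee_xp, deltaLee_xm, map_tmul, map_smul, map_add,
      LinearEquiv.coe_coe, bnToLee_xm, tmul_add, add_tmul, tmul_smul, ← smul_tmul', smul_add]
    match_scalars <;> ring

end Twist

/-- Over a commutative ring `R` in which `2` is invertible, the Lee and
Bar-Natan Frobenius algebras are twist-equivalent: there is an `R`-module automorphism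
`φ` of `R⟨x₊, x₋⟩` intertwining the two multiplications, and intertwining the
comultiplications up to an invertible scalar `u`, i.e. `(φ⊗φ)∘Δ_BN = u · Δ_Lee∘φ`. -/
theorem stmt_6 (h2 : IsUnit (2 : R)) :
    ∃ (φ : (R × R) ≃ₗ[R] (R × R)) (u : Rˣ),
      (∀ v w : R × R, φ (mulBN R v w) = mulLee R (φ v) (φ w)) ∧
      ((TensorProduct.map φ.toLinearMap φ.toLinearMap).comp (deltaBN R)
        = (u : R) • ((deltaLee R).comp φ.toLinearMap)) := by
  let := h2.invertible
  exact ⟨bnToLee R, unitOfInvertible (⅟2 : R), bnToLee_mulBN R, map_bnToLee_comp_deltaBN R⟩
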